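/- Let (\Omega, \mu) be a measure space with 0 < \mu(\Omega) < \infty, and let \{\Delta_i\}_{i \in I} be a finite measurable partition of \Omega with \mu(\Delta_i) > 0 and \mu(\Delta_i) < \infty for every i. Let TOL > 0 and set LocTol_i := \frac{1}{2} \frac{TOL^2}{\mu(\Omega)} \mu(\Delta_i). Let p \in L^2(\Omega, \mu) and let f : \Omega \to \mathbb{R} be measurable with \int_\Omega |f|^4 d\mu < \infty. Then \int_{\Omega} p\, f \, d\mu \leq \left( \sum_{i \in I} \frac{\|f\|_{L^4(\Delta_i)}^4}{LocTol_i} \right)^{1/4} \left( \frac{\max_{i} \mu(\Delta_i)}{2} \right)^{1/4} TOL^{1/2} \, \|p\|_{L^2(\Omega)}. -/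

import Mathlib

/-!
Cauchy–Schwarz in `L²(Ω)` reduces the claim to a bound on `‖f‖₂²`, which splits into a sum
over the cells. On each cell, Cauchy–Schwarz against the constant `1` gives
`‖f‖²_{L²(Δᵢ)} ≤ μ(Δᵢ)^{1/2} ‖f‖²_{L⁴(Δᵢ)}`. The discrete Cauchy–Schwarz inequality with
weights `LocTolᵢ` bounds the resulting sum by
`(∑ ‖f‖⁴_{L⁴(Δᵢ)} / LocTolᵢ)^{1/2} (∑ LocTolᵢ μ(Δᵢ))^{1/2}`, and since `LocTolᵢ` is
proportional to `μ(Δᵢ)` with total `TOL²/2`, the last sum is at most `TOL² max μ(Δᵢ) / 2`.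
-/

open MeasureTheory Real

section Integral

variable {Ω : Type*} [MeasurableSpace Ω] {μ : Measure Ω}

theorem integral_mul_le_sqrt_integral_sq_mul_sqrt_integral_sq {p f : Ω → ℝ}
    (hp : MemLp p 2 μ) (hf : MemLp f 2 μ) :
    ∫ x, p x * f x ∂μ ≤ √(∫ x, p x ^ 2 ∂μ) * √(∫ x, f x ^ 2 ∂μ) := by
  have holder := integral_mul_norm_le_Lp_mul_Lq (f := p) (g := f) .two_two
    (by rwa [ENNReal.ofReal_ofNat]) (by rwa [ENNReal.ofReal_ofNat])
  simp only [norm_eq_abs, rpow_two, sq_abs, ← sqrt_eq_rpow] at holder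
  calc ∫ x, p x * f x ∂μ ≤ |∫ x, p x * f x ∂μ| := le_abs_self _
    _ ≤ ∫ x, |p x * f x| ∂μ := abs_integral_le_integral_abs
    _ = ∫ x, |p x| * |f x| ∂μ := by simp only [abs_mul]
    _ ≤ _ := holder

theorem integral_le_sqrt_measureReal_mul_sqrt_integral_sq [IsFiniteMeasure μ] {g : Ω → ℝ}
    (hg : MemLp g 2 μ) :
    ∫ x, g x ∂μ ≤ √(μ.real Set.univ) * √(∫ x, g x ^ 2 ∂μ) := by
  simpa using integral_mul_le_sqrt_integral_sq_mul_sqrt_integral_sq (memLp_const 1) hg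

theorem memLp_two_sq_of_integrable_pow_four {f : Ω → ℝ} (hf : Measurable f)
    (hf4 : Integrable (fun x => |f x| ^ 4) μ) : MemLp (fun x => f x ^ 2) 2 μ := by
  refine (memLp_two_iff_integrable_sq (hf.pow_const 2).aestronglyMeasurable).2 ?_
  convert hf4 using 2 with x
  rw [← pow_mul]
  exact ((by decide : Even 4).pow_abs _).symm

theorem memLp_two_of_integrable_pow_four [IsFiniteMeasure μ] {f : Ω → ℝ} (hf : Measurable f)
    (hf4 : Integrable (fun x => |f x| ^ 4) μ) : MemLp f 2 μ :=
  (memLp_two_iff_integrable_sq hf.aestronglyMeasurable).2 <|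
    (memLp_two_sq_of_integrable_pow_four hf hf4).integrable one_le_two

theorem integral_eq_sum_setIntegral_of_iUnion_eq_univ {I : Type*} [Fintype I] {Δ : I → Set Ω}
    (hmeas : ∀ i, MeasurableSet (Δ i)) (hdisj : Pairwise (Function.onFun Disjoint Δ))
    (hcover : ⋃ i, Δ i = Set.univ) {g : Ω → ℝ} (hg : Integrable g μ) :
    ∫ x, g x ∂μ = ∑ i, ∫ x in Δ i, g x ∂μ := by
  rw [← integral_iUnion_fintype hmeas hdisj fun i => hg.integrableOn, hcover, setIntegral_univ]

theorem integral_sq_le_sum_sqrt_measureReal_mul_sqrt_setIntegral_pow_four [IsFiniteMeasure μ]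
    {I : Type*} [Fintype I] {Δ : I → Set Ω} (hmeas : ∀ i, MeasurableSet (Δ i))
    (hdisj : Pairwise (Function.onFun Disjoint Δ)) (hcover : ⋃ i, Δ i = Set.univ)
    {f : Ω → ℝ} (hf : Measurable f) (hf4 : Integrable (fun x => |f x| ^ 4) μ) :
    ∫ x, f x ^ 2 ∂μ ≤ ∑ i, √(μ.real (Δ i)) * √(∫ x in Δ i, |f x| ^ 4 ∂μ) := by
  have hf2 := memLp_two_sq_of_integrable_pow_four hf hf4
  rw [integral_eq_sum_setIntegral_of_iUnion_eq_univ hmeas hdisj hcover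
    (hf2.integrable one_le_two)]
  refine Finset.sum_le_sum fun i _ => ?_
  simpa [← pow_mul, (by decide : Even 4).pow_abs] using
    integral_le_sqrt_measureReal_mul_sqrt_integral_sq (hf2.restrict (Δ i))

end Integral

section FiniteSum

variable {ι : Type*}

theorem sum_sqrt_mul_sqrt_le_sqrt_sum_div_mul_sqrt_sum_mul (s : Finset ι) {m F L : ι → ℝ}
    (hm : ∀ i, 0 ≤ m i) (hF : ∀ i, 0 ≤ F i) (hL : ∀ i, 0 < L i) :
    ∑ i ∈ s, √(m i) * √(F i) ≤ √(∑ i ∈ s, F i / L i) * √(∑ i ∈ s, L i * m i) := by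
  calc ∑ i ∈ s, √(m i) * √(F i) = ∑ i ∈ s, √(F i / L i) * √(L i * m i) := by
        refine Finset.sum_congr rfl fun i _ => ?_
        rw [← sqrt_mul (hm i), ← sqrt_mul (div_nonneg (hF i) (hL i).le)]
        have hLi := (hL i).ne'
        congr 1
        field_simp
    _ ≤ _ := sum_sqrt_mul_sqrt_le s (fun i => div_nonneg (hF i) (hL i).le)
        fun i => mul_nonneg (hL i).le (hm i)

theorem sum_sq_le_iSup_mul_sum [Fintype ι] {m : ι → ℝ} (hm : ∀ i, 0 ≤ m i) :
    ∑ i, m i ^ 2 ≤ (⨆ i, m i) * ∑ i, m i := by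
  rw [Finset.mul_sum]
  refine Finset.sum_le_sum fun i _ => ?_
  rw [sq]
  exact mul_le_mul_of_nonneg_right (le_ciSup (Set.finite_range m).bddAbove i) (hm i)

theorem sum_sqrt_mul_sqrt_le_of_proportional_weights [Fintype ι] {m F L : ι → ℝ} {c : ℝ}
    (hc : 0 < c) (hm : ∀ i, 0 < m i) (hF : ∀ i, 0 ≤ F i) (hL : ∀ i, L i = c * m i) :
    ∑ i, √(m i) * √(F i) ≤ √(∑ i, F i / L i) * √(c * ((⨆ i, m i) * ∑ i, m i)) := by
  refine (sum_sqrt_mul_sqrt_le_sqrt_sum_div_mul_sqrt_sum_mul _ (fun i => (hm i).le) hF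
    fun i => hL i ▸ mul_pos hc (hm i)).trans ?_
  gcongr
  calc ∑ i, L i * m i = c * ∑ i, m i ^ 2 := by simp only [hL, Finset.mul_sum, mul_assoc, sq]
    _ ≤ c * ((⨆ i, m i) * ∑ i, m i) := by
      gcongr
      exact sum_sq_le_iSup_mul_sum fun i => (hm i).le

end FiniteSum

theorem sqrt_sqrt_mul_sqrt_sq_mul {S b t : ℝ} (hS : 0 ≤ S) (hb : 0 ≤ b) (ht : 0 ≤ t) :
    √(√S * √(t ^ 2 * b)) = S ^ ((1 : ℝ) / 4) * b ^ ((1 : ℝ) / 4) * t ^ ((1 : ℝ) / 2) := by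
  rw [sqrt_mul' _ hb, sqrt_sq ht, sqrt_mul (sqrt_nonneg S), sqrt_mul' _ (sqrt_nonneg b)]
  simp only [sqrt_eq_rpow, ← rpow_mul hS, ← rpow_mul hb]
  norm_num
  ring

theorem localized_pressure_divergence_bound_general
    {Ω : Type*} [MeasurableSpace Ω] (μ : Measure Ω)
    (hΩpos : 0 < μ Set.univ) (hΩfin : μ Set.univ < ⊤)
    {I : Type*} [Fintype I] (Δ : I → Set Ω)
    (hmeas : ∀ i, MeasurableSet (Δ i))
    (hdisj : Pairwise (Function.onFun Disjoint Δ))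
    (hcover : (⋃ i, Δ i) = Set.univ)
    (hΔpos : ∀ i, 0 < μ (Δ i))
    (TOL : ℝ) (hTOL : 0 < TOL)
    (LocTol : I → ℝ)
    (hLocTol : ∀ i, LocTol i = 1 / 2 * TOL ^ 2 / (μ Set.univ).toReal * (μ (Δ i)).toReal)
    (p : Ω → ℝ) (hp : MemLp p 2 μ)
    (f : Ω → ℝ) (hf : Measurable f) (hf4 : Integrable (fun x => |f x| ^ 4) μ) :
    ∫ x, p x * f x ∂μ ≤
      (∑ i, (∫ x in Δ i, |f x| ^ 4 ∂μ) / LocTol i) ^ ((1 : ℝ) / 4) *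
        ((⨆ i, (μ (Δ i)).toReal) / 2) ^ ((1 : ℝ) / 4) * TOL ^ ((1 : ℝ) / 2) *
        (∫ x, |p x| ^ 2 ∂μ) ^ ((1 : ℝ) / 2) := by
  have : IsFiniteMeasure μ := ⟨hΩfin⟩
  simp only [← measureReal_def] at hLocTol ⊢
  set S := ∑ i, (∫ x in Δ i, |f x| ^ 4 ∂μ) / LocTol i
  set M := ⨆ i, μ.real (Δ i)
  have hΩ : 0 < μ.real Set.univ := ENNReal.toReal_pos hΩpos.ne' hΩfin.ne
  have hΔ (i : I) : 0 < μ.real (Δ i) := ENNReal.toReal_pos (hΔpos i).ne' (measure_ne_top μ _)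
  have hF (i : I) : 0 ≤ ∫ x in Δ i, |f x| ^ 4 ∂μ :=
    setIntegral_nonneg (hmeas i) fun _ _ => by positivity
  have hLocTol' (i : I) : LocTol i = TOL ^ 2 / 2 / μ.real Set.univ * μ.real (Δ i) := by
    rw [hLocTol]; ring
  have hS : 0 ≤ S :=
    Finset.sum_nonneg fun i _ => div_nonneg (hF i) (by rw [hLocTol']; positivity)
  have hM : 0 ≤ M := Real.iSup_nonneg fun i => (hΔ i).le
  have hweights :
      TOL ^ 2 / 2 / μ.real Set.univ * (M * ∑ i, μ.real (Δ i)) = TOL ^ 2 * (M / 2) := by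
    rw [← measureReal_iUnion_fintype hdisj hmeas, hcover]; field_simp
  have hf_sq : ∫ x, f x ^ 2 ∂μ ≤ √S * √(TOL ^ 2 * (M / 2)) := by
    refine (integral_sq_le_sum_sqrt_measureReal_mul_sqrt_setIntegral_pow_four hmeas hdisj hcover
      hf hf4).trans ?_
    rw [← hweights]
    exact sum_sqrt_mul_sqrt_le_of_proportional_weights (by positivity) hΔ hF hLocTol'
  calc ∫ x, p x * f x ∂μ ≤ √(∫ x, p x ^ 2 ∂μ) * √(∫ x, f x ^ 2 ∂μ) :=
        integral_mul_le_sqrt_integral_sq_mul_sqrt_integral_sq hp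
          (memLp_two_of_integrable_pow_four hf hf4)
    _ ≤ √(∫ x, p x ^ 2 ∂μ) * √(√S * √(TOL ^ 2 * (M / 2))) := by gcongr
    _ = _ := by
      rw [sqrt_sqrt_mul_sqrt_sq_mul hS (by positivity) hTOL.le]
      simp only [sq_abs, ← sqrt_eq_rpow]
      exact mul_comm _ _

theorem localized_pressure_divergence_bound
    {Ω : Type*} [MeasurableSpace Ω] (μ : Measure Ω)
    (hΩpos : 0 < μ Set.univ) (hΩfin : μ Set.univ < ⊤)
    {I : Type*} [Fintype I] [Nonempty I] (Δ : I → Set Ω)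
    (hmeas : ∀ i, MeasurableSet (Δ i))
    (hdisj : Pairwise (Function.onFun Disjoint Δ))
    (hcover : (⋃ i, Δ i) = Set.univ)
    (hΔpos : ∀ i, 0 < μ (Δ i)) (hΔfin : ∀ i, μ (Δ i) < ⊤)
    (TOL : ℝ) (hTOL : 0 < TOL)
    (LocTol : I → ℝ)
    (hLocTol : ∀ i, LocTol i = 1 / 2 * TOL ^ 2 / (μ Set.univ).toReal * (μ (Δ i)).toReal)
    (p : Ω → ℝ) (hp : MemLp p 2 μ)
    (f : Ω → ℝ) (hf : Measurable f) (hf4 : Integrable (fun x => |f x| ^ 4) μ) :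
    ∫ x, p x * f x ∂μ ≤
      (∑ i, (∫ x in Δ i, |f x| ^ 4 ∂μ) / LocTol i) ^ ((1 : ℝ) / 4) *
        ((⨆ i, (μ (Δ i)).toReal) / 2) ^ ((1 : ℝ) / 4) * TOL ^ ((1 : ℝ) / 2) *
        (∫ x, |p x| ^ 2 ∂μ) ^ ((1 : ℝ) / 2) :=
  localized_pressure_divergence_bound_general μ hΩpos hΩfin Δ hmeas hdisj hcover hΔpos TOL hTOL
    LocTol hLocTol p hp f hf hf4
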